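/- Let 0 < α ≤ 1, R > 0, and x₀ ∈ ℝ^d with d ≥ 2. The ball B_R(x₀) satisfies the condition II_{∂Ω} ≥ (1-α)(x·ν)/|x|² at every boundary point (where II_{∂B_R(x₀)} = (1/R)·g_E and ν(x) = (x - x₀)/R) if and only if |x₀| ≤ αR or |x₀| > R. Concretely: for all ω ∈ S^{d-1}, writing x = x₀ + Rω, one has 1/R ≥ (1-α)(x·ω)/|x|², if and only if |x₀| ≤ αR or |x₀| > R. -/

import Mathlib

/-!
Write `x = x₀ + Rω`, `n = ‖x₀‖` and `t = ⟪x₀, ω⟫ ∈ [-n, n]`. Since `⟪x, ω⟫ = t + R` and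
`‖x‖² = n² + 2Rt + R²`, clearing denominators turns the condition at `ω` into
`0 ≤ n² + (1 + α)Rt + αR²`. This is increasing in `t`, so the worst direction is
`ω = -x₀/n`, where the right-hand side is `(n - R)(n - αR)`.
-/

open RealInnerProductSpace

section

variable {E : Type*} [NormedAddCommGroup E] [InnerProductSpace ℝ E]

lemma inner_add_smul_left_of_norm_eq_one {ω : E} (hω : ‖ω‖ = 1) (x₀ : E) (R : ℝ) :
    ⟪x₀ + R • ω, ω⟫ = ⟪x₀, ω⟫ + R := by
  rw [inner_add_left, real_inner_smul_left, real_inner_self_eq_norm_sq, hω]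
  ring

lemma norm_add_smul_sq_of_norm_eq_one {ω : E} (hω : ‖ω‖ = 1) (x₀ : E) (R : ℝ) :
    ‖x₀ + R • ω‖ ^ 2 = ‖x₀‖ ^ 2 + 2 * R * ⟪x₀, ω⟫ + R ^ 2 := by
  rw [norm_add_sq_real, real_inner_smul_right, norm_smul, hω, Real.norm_eq_abs, mul_one, sq_abs]
  ring

lemma add_smul_ne_zero_of_norm_ne {ω : E} (hω : ‖ω‖ = 1) {x₀ : E} {R : ℝ} (hR : 0 ≤ R)
    (hx₀ : ‖x₀‖ ≠ R) : x₀ + R • ω ≠ 0 := by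
  intro h
  apply hx₀
  rw [eq_neg_of_add_eq_zero_left h, norm_neg, norm_smul, hω, Real.norm_of_nonneg hR, mul_one]

lemma one_sub_mul_inner_div_le_one_div_iff {ω : E} (hω : ‖ω‖ = 1) {x₀ : E} {R : ℝ} (hR : 0 < R)
    (hx : x₀ + R • ω ≠ 0) (α : ℝ) :
    (1 - α) * ⟪x₀ + R • ω, ω⟫ / ‖x₀ + R • ω‖ ^ 2 ≤ 1 / R ↔
      0 ≤ ‖x₀‖ ^ 2 + (1 + α) * R * ⟪x₀, ω⟫ + α * R ^ 2 := by
  rw [div_le_div_iff₀ (by positivity) hR, inner_add_smul_left_of_norm_eq_one hω,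
    norm_add_smul_sq_of_norm_eq_one hω]
  constructor <;> intro h <;> linarith

lemma sub_mul_sub_le_of_norm_eq_one {ω : E} (hω : ‖ω‖ = 1) (x₀ : E) {α R : ℝ} (hα : -1 ≤ α)
    (hR : 0 ≤ R) :
    (‖x₀‖ - R) * (‖x₀‖ - α * R) ≤ ‖x₀‖ ^ 2 + (1 + α) * R * ⟪x₀, ω⟫ + α * R ^ 2 := by
  have ht : -‖x₀‖ ≤ ⟪x₀, ω⟫ := by
    simpa [hω] using neg_le_of_abs_le (abs_real_inner_le_norm x₀ ω)
  nlinarith [mul_nonneg (mul_nonneg (by linarith : 0 ≤ 1 + α) hR) (by linarith : 0 ≤ ⟪x₀, ω⟫ + ‖x₀‖)]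

lemma norm_neg_inv_norm_smul {x₀ : E} (hx₀ : x₀ ≠ 0) : ‖-(‖x₀‖⁻¹ • x₀)‖ = 1 := by
  rw [norm_neg, norm_smul, norm_inv, norm_norm, inv_mul_cancel₀ (norm_ne_zero_iff.mpr hx₀)]

lemma inner_neg_inv_norm_smul_right (x₀ : E) : ⟪x₀, -(‖x₀‖⁻¹ • x₀)⟫ = -‖x₀‖ := by
  rcases eq_or_ne x₀ 0 with rfl | hx₀
  · simp
  rw [inner_neg_right, real_inner_smul_right, real_inner_self_eq_norm_sq]
  field_simp

end

lemma zero_le_sub_mul_sub_iff {n α R : ℝ} (hα : α ≤ 1) (hR : 0 ≤ R) (hn : n ≠ R) :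
    0 ≤ (n - R) * (n - α * R) ↔ n ≤ α * R ∨ R < n := by
  have hαR : α * R ≤ R := by nlinarith
  constructor
  · intro h
    by_contra! hc
    nlinarith [mul_pos (sub_pos.mpr (lt_of_le_of_ne hc.2 hn)) (sub_pos.mpr hc.1)]
  · rintro (h | h)
    · exact mul_nonneg_of_nonpos_of_nonpos (by linarith) (by linarith)
    · exact mul_nonneg (by linarith) (by linarith)

theorem stmt0_general (d : ℕ) (α R : ℝ) (hα0 : 0 < α) (hα1 : α ≤ 1) (hR : 0 < R)
    (x₀ : EuclideanSpace ℝ (Fin d)) (hx₀ : ‖x₀‖ ≠ R) :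
    (∀ ω : EuclideanSpace ℝ (Fin d), ‖ω‖ = 1 →
      (1 - α) * (inner ℝ (x₀ + R • ω) ω : ℝ) / ‖x₀ + R • ω‖ ^ 2 ≤ 1 / R)
    ↔ (‖x₀‖ ≤ α * R ∨ R < ‖x₀‖) := by
  have hα : -1 ≤ α := by linarith
  rw [← zero_le_sub_mul_sub_iff hα1 hR.le hx₀]
  constructor
  · intro h
    rcases eq_or_ne x₀ 0 with rfl | hx₀0
    · rw [norm_zero]
      nlinarith [mul_pos (mul_pos hα0 hR) hR]
    set ω := -(‖x₀‖⁻¹ • x₀)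
    have hω : ‖ω‖ = 1 := norm_neg_inv_norm_smul hx₀0
    have hcond := (one_sub_mul_inner_div_le_one_div_iff hω hR
      (add_smul_ne_zero_of_norm_ne hω hR.le hx₀) α).mp (h ω hω)
    rw [inner_neg_inv_norm_smul_right] at hcond
    linarith
  · intro h ω hω
    rw [one_sub_mul_inner_div_le_one_div_iff hω hR (add_smul_ne_zero_of_norm_ne hω hR.le hx₀)]
    exact h.trans (sub_mul_sub_le_of_norm_eq_one hω x₀ hα hR.le)

/-- the ball `B_R(x₀)` satisfies the geometric condition
`II ≥ (1-α)(x·ν)/|x|²` (with `II = (1/R) g_E`, `ν(x) = (x-x₀)/R`) iff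
`‖x₀‖ ≤ αR` or `‖x₀‖ > R`. -/
theorem stmt0 (d : ℕ) (hd : 2 ≤ d) (α R : ℝ) (hα0 : 0 < α) (hα1 : α ≤ 1) (hR : 0 < R)
    (x₀ : EuclideanSpace ℝ (Fin d)) (hx₀ : ‖x₀‖ ≠ R) :
    (∀ ω : EuclideanSpace ℝ (Fin d), ‖ω‖ = 1 →
      (1 - α) * (inner ℝ (x₀ + R • ω) ω : ℝ) / ‖x₀ + R • ω‖ ^ 2 ≤ 1 / R)
    ↔ (‖x₀‖ ≤ α * R ∨ R < ‖x₀‖) :=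
  stmt0_general d α R hα0 hα1 hR x₀ hx₀
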